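/- arXiv:1907.08811 — 2 statements merged into one kernel-verified Lean document; each statement's English description precedes it below -/
import Mathlib

section
/- If A⁽¹⁾, …, A⁽ᴺ⁾ are real square matrices each having positive definite symmetric part (i.e., H(A⁽ⁱ⁾) is symmetric positive definite), and 𝒜 = I − A⁽ᴺ⁾ ⊗ ⋯ ⊗ A⁽¹⁾, then λ_min(𝒜𝒜ᵀ) ≤ 1 + ∏_{i=1}^N σ_min²(A⁽ⁱ⁾). -/
/-!
For each `i` pick a unit vector `zᵢ` with `‖A⁽ⁱ⁾ᵀ zᵢ‖ ≤ σ_min(A⁽ⁱ⁾)`: a minimiser `w` of `‖A w‖`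
on the unit sphere is an eigenvector of `AᵀA` for the eigenvalue `σ_min²`, so `z = A w / ‖A w‖`
works, and when `A w = 0` any unit vector of `ker Aᵀ` does. For `x = z₁ ⊗ ⋯ ⊗ z_N` the Rayleigh
quotient of `𝒜𝒜ᵀ` is `‖x - 𝒦ᵀ x‖² = 1 - 2 ∏ zᵢᵀ A⁽ⁱ⁾ zᵢ + ∏ ‖A⁽ⁱ⁾ᵀ zᵢ‖²`, where `𝒦` is the
Kronecker product, and `zᵢᵀ A⁽ⁱ⁾ zᵢ = zᵢᵀ H(A⁽ⁱ⁾) zᵢ > 0`.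
-/

open Matrix

/-- The spectral norm (largest singular value) of a real matrix, as the operator
norm of the induced map between Euclidean spaces. -/
noncomputable def specNorm {m n : Type*} [Fintype m] [Fintype n] [DecidableEq n]
    (M : Matrix m n ℝ) : ℝ :=
  ‖LinearMap.toContinuousLinearMap (Matrix.toEuclideanLin M)‖

/-- The smallest singular value of a real matrix: the infimum of `‖Mx‖` over
unit vectors `x`. -/
noncomputable def sigmaMin {m n : Type*} [Fintype m] [Fintype n] [DecidableEq n]
    (M : Matrix m n ℝ) : ℝ :=
  sInf ((fun x => ‖Matrix.toEuclideanLin M x‖) '' Metric.sphere 0 1)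

/-- Symmetric part of a square matrix. -/
noncomputable def Hpart {m : Type*} (A : Matrix m m ℝ) : Matrix m m ℝ := (1/2 : ℝ) • (A + Aᵀ)

/-- The Kronecker product of a finite family of square matrices, realized on the
dependent-product index type. -/
noncomputable def kronFamily {N : ℕ} {n : Fin N → Type*} [∀ i, Fintype (n i)]
    (A : ∀ i, Matrix (n i) (n i) ℝ) : Matrix (∀ i, n i) (∀ i, n i) ℝ :=
  fun a b => ∏ i, A i (a i) (b i)

/-- The largest eigenvalue of a (symmetric) matrix, via the Rayleigh-quotient
characterization: the supremum of `x ⬝ᵥ M x` over unit vectors `x`. -/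
noncomputable def lamMax {m : Type*} [Fintype m] (M : Matrix m m ℝ) : ℝ :=
  sSup {r | ∃ x : m → ℝ, x ⬝ᵥ x = 1 ∧ r = x ⬝ᵥ M *ᵥ x}

/-- The smallest eigenvalue of a (symmetric) matrix, via the Rayleigh-quotient
characterization: the infimum of `x ⬝ᵥ M x` over unit vectors `x`. -/
noncomputable def lamMin {m : Type*} [Fintype m] (M : Matrix m m ℝ) : ℝ :=
  sInf {r | ∃ x : m → ℝ, x ⬝ᵥ x = 1 ∧ r = x ⬝ᵥ M *ᵥ x}

open Metric

namespace ContinuousLinearMap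

theorem reApplyInnerSelf_adjoint_comp_self {𝕜 E F : Type*} [RCLike 𝕜] [NormedAddCommGroup E]
    [InnerProductSpace 𝕜 E] [CompleteSpace E] [NormedAddCommGroup F] [InnerProductSpace 𝕜 F]
    [CompleteSpace F] (f : E →L[𝕜] F) (x : E) :
    (adjoint f ∘L f).reApplyInnerSelf x = ‖f x‖ ^ 2 := by
  simp [reApplyInnerSelf, adjoint_inner_left]

variable {E : Type*} [NormedAddCommGroup E] [InnerProductSpace ℝ E]

theorem adjoint_comp_self_apply_eq_of_isMinOn [CompleteSpace E] (f : E →L[ℝ] E) {w : E}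
    (hw : ‖w‖ = 1) (hmin : IsMinOn (‖f ·‖) (sphere 0 1) w) : adjoint f (f w) = ‖f w‖ ^ 2 • w := by
  have hextr : IsLocalExtrOn (adjoint f ∘L f).reApplyInnerSelf (sphere 0 ‖w‖) w := by
    refine Or.inl (IsMinOn.localize fun x hx => ?_)
    rw [hw] at hx
    simp only [Set.mem_ofPred_eq, reApplyInnerSelf_adjoint_comp_self]
    gcongr
    exact hmin hx
  have heig := (IsSelfAdjoint.star_mul_self f).eq_smul_self_of_isLocalExtrOn hextr
  rw [star_eq_adjoint, mul_def] at heig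
  simpa [rayleighQuotient, reApplyInnerSelf_adjoint_comp_self, hw] using heig

variable [FiniteDimensional ℝ E]

theorem exists_mem_sphere_adjoint_apply_eq_zero (f : E →L[ℝ] E)
    (hf : ¬ Function.Injective f) : ∃ z ∈ sphere (0 : E) 1, adjoint f z = 0 := by
  -- an injective `f†` is surjective in finite dimension, and `ker f = (range f†)ᗮ`
  have hker : (adjoint f).ker ≠ ⊥ := by
    intro h
    apply hf
    have hsurj : Function.Surjective (adjoint f) :=
      LinearMap.injective_iff_surjective.mp (LinearMap.ker_eq_bot.mp h)
    rw [← coe_coe, ← LinearMap.ker_eq_bot, ← adjoint_adjoint f, ← orthogonal_range,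
      LinearMap.range_eq_top.mpr hsurj, Submodule.top_orthogonal_eq_bot]
  obtain ⟨y, hy, hy0⟩ := Submodule.exists_mem_ne_zero_of_ne_bot hker
  refine ⟨‖y‖⁻¹ • y, by simp [norm_smul, hy0], ?_⟩
  rw [map_smul, show adjoint f y = 0 from hy, smul_zero]

theorem exists_mem_sphere_norm_adjoint_apply_le_of_isMinOn (f : E →L[ℝ] E) {w : E}
    (hw : ‖w‖ = 1) (hmin : IsMinOn (‖f ·‖) (sphere 0 1) w) :
    ∃ z ∈ sphere (0 : E) 1, ‖adjoint f z‖ ≤ ‖f w‖ := by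
  by_cases hfw : f w = 0
  · have hf : ¬ Function.Injective f := fun hf =>
      ne_zero_of_norm_ne_zero (hw.trans_ne one_ne_zero) (hf (hfw.trans (map_zero f).symm))
    obtain ⟨z, hz, hfz⟩ := exists_mem_sphere_adjoint_apply_eq_zero f hf
    exact ⟨z, hz, by simp [hfz]⟩
  · refine ⟨‖f w‖⁻¹ • f w, by simp [norm_smul, hfw], le_of_eq ?_⟩
    rw [map_smul, adjoint_comp_self_apply_eq_of_isMinOn f hw hmin, smul_smul, sq,
      inv_mul_cancel_left₀ (norm_ne_zero_iff.mpr hfw), norm_smul, hw, mul_one, norm_norm]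

theorem exists_mem_sphere_norm_adjoint_apply_le_sInf [Nontrivial E] (f : E →L[ℝ] E) :
    ∃ z ∈ sphere (0 : E) 1, ‖adjoint f z‖ ≤ sInf ((‖f ·‖) '' sphere 0 1) := by
  have := FiniteDimensional.proper_rclike ℝ E
  obtain ⟨w, hw, hmin⟩ := (isCompact_sphere (0 : E) 1).exists_isMinOn
    (NormedSpace.sphere_nonempty.mpr zero_le_one) (f.continuous.norm.continuousOn)
  rw [sInf_image', hmin.iInf_eq hw]
  exact exists_mem_sphere_norm_adjoint_apply_le_of_isMinOn f (mem_sphere_zero_iff_norm.mp hw) hmin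

end ContinuousLinearMap

section RealMatrix

variable {m : Type*} [Fintype m]

theorem EuclideanSpace.real_norm_toLp_sq (v : m → ℝ) : ‖WithLp.toLp 2 v‖ ^ 2 = v ⬝ᵥ v := by
  rw [← real_inner_self_eq_norm_sq, EuclideanSpace.inner_toLp_toLp, star_trivial]

theorem exists_dotProduct_self_eq_one_transpose_mulVec_le_sigmaMin_sq [DecidableEq m]
    [Nonempty m] (M : Matrix m m ℝ) :
    ∃ z : m → ℝ, z ⬝ᵥ z = 1 ∧ (Mᵀ *ᵥ z) ⬝ᵥ (Mᵀ *ᵥ z) ≤ sigmaMin M ^ 2 := by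
  obtain ⟨z, hz, hle⟩ := (toEuclideanCLM (𝕜 := ℝ) M).exists_mem_sphere_norm_adjoint_apply_le_sInf
  have hadj :
      ContinuousLinearMap.adjoint (toEuclideanCLM (𝕜 := ℝ) M) = toEuclideanCLM (𝕜 := ℝ) Mᵀ := by
    rw [← ContinuousLinearMap.star_eq_adjoint, ← map_star, star_eq_conjTranspose,
      conjTranspose_eq_transpose_of_trivial]
  refine ⟨WithLp.ofLp z, ?_, ?_⟩
  · rw [← EuclideanSpace.real_norm_toLp_sq, WithLp.toLp_ofLp, mem_sphere_zero_iff_norm.mp hz,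
      one_pow]
  · rw [← EuclideanSpace.real_norm_toLp_sq, ← ofLp_toEuclideanCLM, WithLp.toLp_ofLp, ← hadj]
    exact pow_le_pow_left₀ (norm_nonneg _) hle 2

theorem dotProduct_Hpart_mulVec_self (M : Matrix m m ℝ) (v : m → ℝ) :
    v ⬝ᵥ Hpart M *ᵥ v = v ⬝ᵥ M *ᵥ v := by
  rw [Hpart, smul_mulVec, add_mulVec, dotProduct_smul, dotProduct_add,
    dotProduct_transpose_mulVec, smul_eq_mul]
  ring

theorem Matrix.PosDef.dotProduct_mulVec_pos_of_Hpart {M : Matrix m m ℝ} (hM : (Hpart M).PosDef)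
    {v : m → ℝ} (hv : v ≠ 0) : 0 < v ⬝ᵥ M *ᵥ v := by
  simpa [dotProduct_Hpart_mulVec_self] using hM.dotProduct_mulVec_pos hv

theorem dotProduct_mul_transpose_mulVec (P : Matrix m m ℝ) (x : m → ℝ) :
    x ⬝ᵥ (P * Pᵀ) *ᵥ x = (Pᵀ *ᵥ x) ⬝ᵥ (Pᵀ *ᵥ x) := by
  rw [← mulVec_mulVec, dotProduct_mulVec, mulVec_transpose]

theorem lamMin_of_isEmpty [IsEmpty m] (M : Matrix m m ℝ) : lamMin M = 0 := by
  simp [lamMin, dotProduct]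

theorem lamMin_mul_transpose_le (P : Matrix m m ℝ) {x : m → ℝ} (hx : x ⬝ᵥ x = 1) :
    lamMin (P * Pᵀ) ≤ (Pᵀ *ᵥ x) ⬝ᵥ (Pᵀ *ᵥ x) := by
  have hbdd : BddBelow {r | ∃ x : m → ℝ, x ⬝ᵥ x = 1 ∧ r = x ⬝ᵥ (P * Pᵀ) *ᵥ x} := by
    refine ⟨0, ?_⟩
    rintro r ⟨y, -, rfl⟩
    rw [dotProduct_mul_transpose_mulVec]
    exact Finset.sum_nonneg fun i _ => mul_self_nonneg _
  exact (csInf_le hbdd ⟨x, hx, rfl⟩).trans_eq (dotProduct_mul_transpose_mulVec P x)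

theorem lamMin_one_sub_mul_transpose_le [DecidableEq m] (K : Matrix m m ℝ) {x : m → ℝ}
    (hx : x ⬝ᵥ x = 1) :
    lamMin ((1 - K) * (1 - K)ᵀ) ≤ 1 - 2 * (x ⬝ᵥ Kᵀ *ᵥ x) + (Kᵀ *ᵥ x) ⬝ᵥ (Kᵀ *ᵥ x) := by
  refine (lamMin_mul_transpose_le (1 - K) hx).trans_eq ?_
  rw [transpose_sub, transpose_one, sub_mulVec, one_mulVec, sub_dotProduct, dotProduct_sub,
    dotProduct_sub, hx, dotProduct_comm (Kᵀ *ᵥ x) x]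
  ring

end RealMatrix

section Kronecker

variable {ι : Type*} [Fintype ι] [DecidableEq ι] {n : ι → Type*} [∀ i, Fintype (n i)]

def kronVecFamily (z : ∀ i, n i → ℝ) : (∀ i, n i) → ℝ := fun a => ∏ i, z i (a i)

theorem kronVecFamily_dotProduct (u v : ∀ i, n i → ℝ) :
    kronVecFamily u ⬝ᵥ kronVecFamily v = ∏ i, u i ⬝ᵥ v i := by
  simp only [kronVecFamily, dotProduct, Fintype.prod_sum, Finset.prod_mul_distrib]

end Kronecker

section KroneckerFin

variable {N : ℕ} {n : Fin N → Type*} [∀ i, Fintype (n i)]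

theorem kronFamily_transpose (A : ∀ i, Matrix (n i) (n i) ℝ) :
    (kronFamily A)ᵀ = kronFamily fun i => (A i)ᵀ :=
  rfl

theorem kronFamily_mulVec_kronVecFamily (A : ∀ i, Matrix (n i) (n i) ℝ) (z : ∀ i, n i → ℝ) :
    kronFamily A *ᵥ kronVecFamily z = kronVecFamily fun i => A i *ᵥ z i := by
  funext a
  simp only [mulVec, dotProduct, kronFamily, kronVecFamily, Fintype.prod_sum,
    Finset.prod_mul_distrib]

end KroneckerFin

theorem lamMin_upper_bound_of_posdef_symm_part {N : ℕ} {n : Fin N → Type*}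
    [∀ i, Fintype (n i)] [∀ i, DecidableEq (n i)]
    (A : ∀ i, Matrix (n i) (n i) ℝ) (hA : ∀ i, (Hpart (A i)).PosDef) :
    lamMin ((1 - kronFamily A) * (1 - kronFamily A)ᵀ) ≤
      1 + ∏ i, (sigmaMin (A i)) ^ 2 := by
  rcases isEmpty_or_nonempty (∀ i, n i) with hempty | hne
  · rw [lamMin_of_isEmpty]
    positivity
  obtain ⟨a⟩ := hne
  have : ∀ i, Nonempty (n i) := fun i => ⟨a i⟩
  choose z hz hzσ using fun i => exists_dotProduct_self_eq_one_transpose_mulVec_le_sigmaMin_sq (A i)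
  have hpos : ∀ i, 0 < z i ⬝ᵥ (A i)ᵀ *ᵥ z i := fun i => by
    rw [dotProduct_transpose_mulVec]
    refine (hA i).dotProduct_mulVec_pos_of_Hpart fun h0 => ?_
    simpa [h0] using hz i
  have hx : kronVecFamily z ⬝ᵥ kronVecFamily z = 1 := by simp [kronVecFamily_dotProduct, hz]
  calc lamMin _
      ≤ 1 - 2 * ∏ i, z i ⬝ᵥ (A i)ᵀ *ᵥ z i + ∏ i, ((A i)ᵀ *ᵥ z i) ⬝ᵥ ((A i)ᵀ *ᵥ z i) := by
        simpa only [kronFamily_transpose, kronFamily_mulVec_kronVecFamily,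
          kronVecFamily_dotProduct] using lamMin_one_sub_mul_transpose_le (kronFamily A) hx
    _ ≤ 1 + ∏ i, sigmaMin (A i) ^ 2 := by
        have hprod_pos : 0 < ∏ i, z i ⬝ᵥ (A i)ᵀ *ᵥ z i := Finset.prod_pos fun i _ => hpos i
        have hprod_le : ∏ i, ((A i)ᵀ *ᵥ z i) ⬝ᵥ ((A i)ᵀ *ᵥ z i) ≤ ∏ i, sigmaMin (A i) ^ 2 :=
          Finset.prod_le_prod (fun i _ => Finset.sum_nonneg fun j _ => mul_self_nonneg _)
            fun i _ => hzσ i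
        linarith
end

section
/- Let Dᵢ be invertible diagonal real matrices with ∏_{i=1}^N ‖Dᵢ‖₂ < 1, and suppose A⁽ⁱ⁾ = SᵢDᵢSᵢ⁻¹ for invertible Sᵢ. Then 𝒜 = I − A⁽ᴺ⁾ ⊗ ⋯ ⊗ A⁽¹⁾ is invertible and ‖𝒜⁻¹‖₂ ≤ (∏_{i=1}^N cond(Sᵢ)) / (1 − ∏_{i=1}^N ‖Dᵢ‖₂). -/
open Matrix

/-!
Conjugating by `𝒮 = S_N ⊗ ⋯ ⊗ S₁` turns `1 - A⁽ᴺ⁾ ⊗ ⋯ ⊗ A⁽¹⁾` into `𝒮 (1 - 𝒟) 𝒮⁻¹` with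
`𝒟 = D_N ⊗ ⋯ ⊗ D₁`. The spectral norm is submultiplicative on Kronecker products, since
`M_N ⊗ ⋯ ⊗ M₁` is the product of the factors `1 ⊗ ⋯ ⊗ M_i ⊗ ⋯ ⊗ 1`, each a reindexing of
`M_i ⊗ 1`, whose norm is at most `‖M_i‖`. Hence `‖𝒟‖ ≤ ∏ ‖D_i‖ < 1`, the Neumann series gives
`‖(1 - 𝒟)⁻¹‖ ≤ 1 / (1 - ∏ ‖D_i‖)`, and the same submultiplicativity bounds `‖𝒮‖` and `‖𝒮⁻¹‖`.
-/

open scoped Matrix.Norms.L2Operator Kronecker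

namespace Matrix

variable {𝕜 : Type*} [RCLike 𝕜] {m n m' n' r : Type*}
  [Fintype m] [Fintype n] [Fintype m'] [Fintype n'] [Fintype r]

lemma l2_opNorm_one_le [DecidableEq n] : ‖(1 : Matrix n n 𝕜)‖ ≤ 1 := by
  rw [cstar_norm_def, map_one]
  exact ContinuousLinearMap.norm_id_le

lemma isUnit_one_sub_of_l2_opNorm_lt_one [DecidableEq n] {T : Matrix n n 𝕜} (hT : ‖T‖ < 1) :
    IsUnit (1 - T) :=
  (Units.oneSub T hT).isUnit

lemma l2_opNorm_inv_one_sub_le [DecidableEq n] {T : Matrix n n 𝕜} (hT : ‖T‖ < 1) :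
    ‖(1 - T)⁻¹‖ ≤ (1 - ‖T‖)⁻¹ := by
  rw [nonsing_inv_eq_ringInverse, NormedRing.inverse_one_sub T hT]
  change ‖∑' k : ℕ, T ^ k‖ ≤ _
  linarith [tsum_geometric_le_of_norm_lt_one T hT, l2_opNorm_one_le (𝕜 := 𝕜) (n := n)]

lemma l2_opNorm_submatrix_equiv_le [DecidableEq n] [DecidableEq n'] (K : Matrix m' n' 𝕜)
    (e : m ≃ m') (f : n ≃ n') : ‖K.submatrix e f‖ ≤ ‖K‖ := by
  rw [l2_opNorm_def]
  refine ContinuousLinearMap.opNorm_le_bound _ (norm_nonneg K) fun x => ?_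
  let σ := LinearIsometryEquiv.piLpCongrLeft 2 𝕜 𝕜 e.symm
  let τ := LinearIsometryEquiv.piLpCongrLeft 2 𝕜 𝕜 f
  calc _ = ‖σ (WithLp.toLp 2 (K *ᵥ τ x))‖ := by
        congr 1
        ext i
        exact congrFun (submatrix_mulVec_equiv K x.ofLp e f) i
    _ ≤ ‖K‖ * ‖x‖ := by
        rw [LinearIsometryEquiv.norm_map, ← τ.norm_map x]
        exact l2_opNorm_mulVec K _

lemma l2_opNorm_kronecker_one_le [DecidableEq n] [DecidableEq r] (A : Matrix m n 𝕜) :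
    ‖A ⊗ₖ (1 : Matrix r r 𝕜)‖ ≤ ‖A‖ := by
  rw [l2_opNorm_def]
  refine ContinuousLinearMap.opNorm_le_bound _ (norm_nonneg A) fun x => ?_
  set y : r → EuclideanSpace 𝕜 n := fun s => WithLp.toLp 2 fun j => x (j, s)
  have hcoord : ∀ i s, ((A ⊗ₖ (1 : Matrix r r 𝕜)) *ᵥ x) (i, s) = (A *ᵥ y s) i := by
    intro i s
    simp [mulVec, dotProduct, Fintype.sum_prod_type, kroneckerMap_apply, one_apply, y]
  refine (sq_le_sq₀ (norm_nonneg _) (by positivity)).1 ?_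
  calc _ = ∑ s, ‖(EuclideanSpace.equiv m 𝕜).symm (A *ᵥ y s)‖ ^ 2 := by
        simp only [EuclideanSpace.norm_sq_eq]
        rw [Fintype.sum_prod_type, Finset.sum_comm]
        simp [hcoord]
    _ ≤ ∑ s, (‖A‖ * ‖y s‖) ^ 2 := by
        gcongr with s
        exact l2_opNorm_mulVec A (y s)
    _ = (‖A‖ * ‖x‖) ^ 2 := by
        simp only [mul_pow, ← Finset.mul_sum, EuclideanSpace.norm_sq_eq, y]
        rw [Fintype.sum_prod_type, Finset.sum_comm]

lemma prod_one_apply {ι R : Type*} [Fintype ι] [CommMonoidWithZero R] {n : ι → Type*}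
    [∀ i, DecidableEq (n i)] (x y : ∀ i, n i) :
    ∏ i, (1 : Matrix (n i) (n i) R) (x i) (y i) = (1 : Matrix (∀ i, n i) (∀ i, n i) R) x y := by
  simp only [one_apply, Finset.prod_boole, Finset.mem_univ, true_implies, funext_iff]

lemma nonsing_inv_conj {R : Type*} [CommRing R] [DecidableEq n] {S : Matrix n n R}
    (hS : IsUnit S) (X : Matrix n n R) : (S * X * S⁻¹)⁻¹ = S * X⁻¹ * S⁻¹ := by
  rw [mul_inv_rev, mul_inv_rev, nonsing_inv_nonsing_inv _ ((isUnit_iff_isUnit_det S).1 hS),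
    mul_assoc]

end Matrix

section kronFamily

variable {N : ℕ} {n : Fin N → Type*} [∀ i, Fintype (n i)]

lemma kronFamily_mul (A B : ∀ i, Matrix (n i) (n i) ℝ) :
    kronFamily (A * B) = kronFamily A * kronFamily B := by
  ext a b
  simp only [kronFamily, Pi.mul_apply, mul_apply]
  rw [Finset.prod_univ_sum, Fintype.piFinset_univ]
  exact Finset.sum_congr rfl fun c _ => Finset.prod_mul_distrib

variable [∀ i, DecidableEq (n i)]

lemma kronFamily_one : kronFamily (1 : ∀ i, Matrix (n i) (n i) ℝ) = 1 := by
  ext x y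
  exact prod_one_apply x y

lemma kronFamily_nonsing_inv {S : ∀ i, Matrix (n i) (n i) ℝ} (hS : ∀ i, IsUnit (S i)) :
    kronFamily S⁻¹ = (kronFamily S)⁻¹ := by
  refine (inv_eq_left_inv ?_).symm
  rw [← kronFamily_mul, ← kronFamily_one]
  congr 1
  funext i
  exact nonsing_inv_mul _ ((isUnit_iff_isUnit_det _).1 (hS i))

lemma isUnit_kronFamily {S : ∀ i, Matrix (n i) (n i) ℝ} (hS : ∀ i, IsUnit (S i)) :
    IsUnit (kronFamily S) := by
  rw [isUnit_iff_isUnit_det]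
  refine isUnit_det_of_right_inverse (B := kronFamily S⁻¹) ?_
  rw [← kronFamily_mul, ← kronFamily_one]
  congr 1
  funext i
  exact mul_nonsing_inv _ ((isUnit_iff_isUnit_det _).1 (hS i))

lemma kronFamily_update_one (a : Fin N) (X : Matrix (n a) (n a) ℝ) :
    kronFamily (Function.update 1 a X) =
      (X ⊗ₖ (1 : Matrix (∀ j : {j // j ≠ a}, n j) (∀ j : {j // j ≠ a}, n j) ℝ)).submatrix
        (Equiv.piSplitAt a n) (Equiv.piSplitAt a n) := by
  ext x y
  simp only [kronFamily, submatrix_apply, kroneckerMap_apply, Equiv.piSplitAt_apply]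
  rw [Fintype.prod_eq_mul_prod_subtype_ne _ a, ← prod_one_apply, Function.update_self]
  congr 1
  exact Finset.prod_congr rfl fun j _ => by rw [Function.update_of_ne j.2, Pi.one_apply]

lemma l2_opNorm_kronFamily_update_one_le (a : Fin N) (X : Matrix (n a) (n a) ℝ) :
    ‖kronFamily (Function.update 1 a X)‖ ≤ ‖X‖ := by
  rw [kronFamily_update_one]
  exact (l2_opNorm_submatrix_equiv_le _ _ _).trans (l2_opNorm_kronecker_one_le X)

lemma l2_opNorm_kronFamily_le (M : ∀ i, Matrix (n i) (n i) ℝ) : ‖kronFamily M‖ ≤ ∏ i, ‖M i‖ := by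
  suffices h : ∀ F : Finset (Fin N), ‖kronFamily (F.piecewise M 1)‖ ≤ ∏ i ∈ F, ‖M i‖ by
    simpa using h Finset.univ
  intro F
  induction F using Finset.induction with
  | empty => simpa [kronFamily_one] using l2_opNorm_one_le
  | insert a F ha ih =>
    have hsplit : (insert a F).piecewise M 1 =
        Function.update (1 : ∀ i, Matrix (n i) (n i) ℝ) a (M a) * F.piecewise M 1 := by
      funext j
      by_cases hj : j = a
      · subst hj
        simp [ha]
      · simp [hj]
    rw [hsplit, kronFamily_mul, Finset.prod_insert ha]
    exact (norm_mul_le _ _).trans <|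
      mul_le_mul (l2_opNorm_kronFamily_update_one_le a (M a)) ih (norm_nonneg _) (norm_nonneg _)

end kronFamily

lemma specNorm_eq_l2_opNorm {m n : Type*} [Fintype m] [Fintype n] [DecidableEq n]
    (M : Matrix m n ℝ) : specNorm M = ‖M‖ := rfl

theorem inv_norm_bound_diagonalizable_general {N : ℕ} {n : Fin N → Type*}
    [∀ i, Fintype (n i)] [∀ i, DecidableEq (n i)]
    (A S D : ∀ i, Matrix (n i) (n i) ℝ)
    (hS : ∀ i, IsUnit (S i))
    (hA : ∀ i, A i = S i * D i * (S i)⁻¹)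
    (h : ∏ i, specNorm (D i) < 1) :
    IsUnit (1 - kronFamily A) ∧
      specNorm (1 - kronFamily A)⁻¹ ≤
        (∏ i, specNorm (S i) * specNorm (S i)⁻¹) / (1 - ∏ i, specNorm (D i)) := by
  simp only [specNorm_eq_l2_opNorm] at h ⊢
  have h𝒮 : IsUnit (kronFamily S) := isUnit_kronFamily hS
  have h𝒟 : ‖kronFamily D‖ < 1 := (l2_opNorm_kronFamily_le D).trans_lt h
  have hsim : 1 - kronFamily A = kronFamily S * (1 - kronFamily D) * (kronFamily S)⁻¹ := by
    rw [show A = S * D * S⁻¹ from funext hA, kronFamily_mul, kronFamily_mul,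
      kronFamily_nonsing_inv hS, mul_sub, sub_mul, mul_one,
      mul_nonsing_inv _ ((isUnit_iff_isUnit_det _).1 h𝒮)]
  refine ⟨hsim ▸ (h𝒮.mul (isUnit_one_sub_of_l2_opNorm_lt_one h𝒟)).mul
    (isUnit_nonsing_inv_iff.2 h𝒮), ?_⟩
  rw [hsim, nonsing_inv_conj h𝒮, ← kronFamily_nonsing_inv hS]
  have hgap : 0 < 1 - ∏ i, ‖D i‖ := sub_pos.2 h
  calc _ ≤ ‖kronFamily S‖ * ‖(1 - kronFamily D)⁻¹‖ * ‖kronFamily S⁻¹‖ := norm_mul₃_le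
    _ ≤ (∏ i, ‖S i‖) * (1 - ∏ i, ‖D i‖)⁻¹ * ∏ i, ‖(S i)⁻¹‖ := by
        gcongr
        · exact l2_opNorm_kronFamily_le S
        · exact (l2_opNorm_inv_one_sub_le h𝒟).trans
            (inv_anti₀ hgap (by linarith [l2_opNorm_kronFamily_le D]))
        · exact l2_opNorm_kronFamily_le S⁻¹
    _ = _ := by rw [Finset.prod_mul_distrib, div_eq_mul_inv]; ring

theorem inv_norm_bound_diagonalizable {N : ℕ} {n : Fin N → Type*}
    [∀ i, Fintype (n i)] [∀ i, DecidableEq (n i)]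
    (A S D : ∀ i, Matrix (n i) (n i) ℝ)
    (hS : ∀ i, IsUnit (S i)) (hDdiag : ∀ i, (D i).IsDiag) (hDinv : ∀ i, IsUnit (D i))
    (hA : ∀ i, A i = S i * D i * (S i)⁻¹)
    (h : ∏ i, specNorm (D i) < 1) :
    IsUnit (1 - kronFamily A) ∧
      specNorm (1 - kronFamily A)⁻¹ ≤
        (∏ i, specNorm (S i) * specNorm (S i)⁻¹) / (1 - ∏ i, specNorm (D i)) :=
  inv_norm_bound_diagonalizable_general A S D hS hA h
end
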